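/- arXiv:1803.09224 — 6 statements merged into one kernel-verified Lean document; each statement's English description precedes it below -/
import Mathlib

section
/- There exists a constant κ₀ > 0, depending only on the QP data and on c₀, such that every dual-feasible point u = (u⁰, u¹, …, uᵐ, u^{m+1}) with D(u,0) ≥ c₀ satisfies ‖uⁱ‖₂ ≤ κ₀ for every i ∈ {0, 1, …, m+1}. -/
open scoped RealInnerProductSpace
open Finset

noncomputable section

/-- `ℝⁿ` with the Euclidean norm. -/
abbrev Evec (n : ℕ) : Type := EuclideanSpace ℝ (Fin n)

variable {n m : ℕ}

/-- Apply a matrix to a Euclidean vector. -/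
def matApply (M : Matrix (Fin n) (Fin n) ℝ) (x : Evec n) : Evec n := Matrix.toEuclideanLin M x

/-- ℓ2 operator norm of a matrix. -/
def opNorm (M : Matrix (Fin n) (Fin n) ℝ) : ℝ :=
  ‖(LinearMap.toContinuousLinearMap (Matrix.toEuclideanLin M))‖

/-- `H_ρ := ρ H_f + H_0`. -/
def Hmat (Hf H0 : Matrix (Fin n) (Fin n) ℝ) (ρ : ℝ) : Matrix (Fin n) (Fin n) ℝ := ρ • Hf + H0

/-- `l(d,0) = Σ_{i≤m̄} |⟨aⁱ,d⟩+bᵢ| + Σ_{i>m̄} max(⟨aⁱ,d⟩+bᵢ,0)` (indices `i.val < mbar` are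
the equality constraints). Note `lpen mbar a b 0 = J⁰`. -/
def lpen (mbar : ℕ) (a : Fin m → Evec n) (b : Fin m → ℝ) (d : Evec n) : ℝ :=
  ∑ i : Fin m, if (i : ℕ) < mbar then |⟪a i, d⟫ + b i| else max (⟪a i, d⟫ + b i) 0

/-- `J(d,ρ) = ρ⟨g,d⟩ + ½⟨d,H_ρ d⟩ + l(d,0)`. -/
def Jval (mbar : ℕ) (g : Evec n) (a : Fin m → Evec n) (b : Fin m → ℝ)
    (Hf H0 : Matrix (Fin n) (Fin n) ℝ) (ρ : ℝ) (d : Evec n) : ℝ :=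
  ρ * ⟪g, d⟫ + (1/2) * ⟪d, matApply (Hmat Hf H0 ρ) d⟫ + lpen mbar a b d

/-- `āⁱ := aⁱ/‖aⁱ‖`. -/
def abar (a : Fin m → Evec n) (i : Fin m) : Evec n := ‖a i‖⁻¹ • a i

/-- `b̄ᵢ := bᵢ/‖aⁱ‖`. -/
def bbar (a : Fin m → Evec n) (b : Fin m → ℝ) (i : Fin m) : ℝ := b i / ‖a i‖

/-- `Cᵢ`: hyperplane for equality constraints, half-space for inequality constraints. -/
def Cset (mbar : ℕ) (a : Fin m → Evec n) (b : Fin m → ℝ) (i : Fin m) : Set (Evec n) :=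
  if (i : ℕ) < mbar then {d | ⟪abar a i, d⟫ + bbar a b i = 0}
  else {d | ⟪abar a i, d⟫ + bbar a b i ≤ 0}

/-- Real-valued support function `δ*(y|C) = sup_{z∈C} ⟨y,z⟫` (via `sSup`). -/
def suppFn (y : Evec n) (C : Set (Evec n)) : ℝ := sSup ((fun z => ⟪y, z⟫) '' C)

/-- Dual feasibility: `u⁰ + Σᵢ ‖aⁱ‖ uⁱ + u^{m+1} = 0` and `‖uⁱ‖ ≤ 1` for `i = 1,…,m`. -/
def DualFeasible (a : Fin m → Evec n) (u0 : Evec n) (u : Fin m → Evec n) (um1 : Evec n) : Prop :=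
  (u0 + ∑ i, ‖a i‖ • u i + um1 = 0) ∧ ∀ i, ‖u i‖ ≤ 1

/-- Real-valued dual objective
`D(u,ρ) = -½⟨u⁰-ρg, H_ρ⁻¹(u⁰-ρg)⟩ - Σᵢ ‖aⁱ‖ δ*(uⁱ|Cᵢ) - δ*(u^{m+1}|X)`. -/
def Dval (mbar : ℕ) (g : Evec n) (a : Fin m → Evec n) (b : Fin m → ℝ)
    (Hf H0 : Matrix (Fin n) (Fin n) ℝ) (X : Set (Evec n)) (ρ : ℝ)
    (u0 : Evec n) (u : Fin m → Evec n) (um1 : Evec n) : ℝ :=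
  -(1/2) * ⟪u0 - ρ • g, matApply (Hmat Hf H0 ρ)⁻¹ (u0 - ρ • g)⟫
    - ∑ i, ‖a i‖ * suppFn (u i) (Cset mbar a b i)
    - suppFn um1 X

/-- Extended-real-valued support function. -/
def suppFnE (y : Evec n) (C : Set (Evec n)) : EReal :=
  ⨆ z ∈ C, ((⟪y, z⟫ : ℝ) : EReal)

/-- Extended-real-valued dual objective (value in `ℝ ∪ {±∞}`; it is `-∞` when a support
function is `+∞`). -/
def DvalE (mbar : ℕ) (g : Evec n) (a : Fin m → Evec n) (b : Fin m → ℝ)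
    (Hf H0 : Matrix (Fin n) (Fin n) ℝ) (X : Set (Evec n)) (ρ : ℝ)
    (u0 : Evec n) (u : Fin m → Evec n) (um1 : Evec n) : EReal :=
  ((-(1/2) * ⟪u0 - ρ • g, matApply (Hmat Hf H0 ρ)⁻¹ (u0 - ρ • g)⟫ : ℝ) : EReal)
    - ∑ i, (‖a i‖ : EReal) * suppFnE (u i) (Cset mbar a b i)
    - suppFnE um1 X

/-!
Dual feasibility gives `‖uⁱ‖ ≤ 1` for `1 ≤ i ≤ m`. Each `Cᵢ` contains the point `-b̄ᵢ āⁱ` of norm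
`|b̄ᵢ|` and `0 ∈ X`, so `δ*(uⁱ|Cᵢ) ≥ -|b̄ᵢ|` and `δ*(u^{m+1}|X) ≥ 0`; hence
`c₀ ≤ D(u,0) ≤ -½⟨u⁰, H₀⁻¹u⁰⟩ + Σᵢ |bᵢ|`. Since `H₀⁻¹` is positive definite this bounds `‖u⁰‖`,
and then the feasibility equation `u^{m+1} = -(u⁰ + Σᵢ ‖aⁱ‖uⁱ)` bounds `‖u^{m+1}‖`.
-/

@[norm_cast]
lemma EReal.coe_finset_sum {ι : Type*} (s : Finset ι) (f : ι → ℝ) :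
    ((∑ i ∈ s, f i : ℝ) : EReal) = ∑ i ∈ s, (f i : EReal) :=
  map_sum (⟨⟨Real.toEReal, EReal.coe_zero⟩, EReal.coe_add⟩ : ℝ →+ EReal) f s

namespace Matrix.PosDef

variable {M : Matrix (Fin n) (Fin n) ℝ}

lemma inner_matApply_pos (hM : M.PosDef) {x : Evec n} (hx : x ≠ 0) :
    0 < ⟪x, matApply M x⟫ := by
  have h := hM.dotProduct_mulVec_pos (x := WithLp.equiv 2 (Fin n → ℝ) x) (by simpa using hx)
  rwa [matApply, EuclideanSpace.inner_eq_star_dotProduct, dotProduct_comm]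

lemma exists_pos_mul_norm_sq_le (hM : M.PosDef) :
    ∃ μ > 0, ∀ x : Evec n, μ * ‖x‖ ^ 2 ≤ ⟪x, matApply M x⟫ := by
  have hcont : Continuous fun x : Evec n => ⟪x, matApply M x⟫ :=
    continuous_id.inner (Matrix.toEuclideanLin M).continuous_of_finiteDimensional
  obtain ⟨μ, hμ, hmin⟩ := (isCompact_sphere (0 : Evec n) 1).exists_forall_le' hcont.continuousOn
    fun x hx => hM.inner_matApply_pos (ne_zero_of_mem_unit_sphere ⟨x, hx⟩)
  refine ⟨μ, hμ, fun x => ?_⟩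
  rcases eq_or_ne x 0 with rfl | hx
  · simp
  · have hnx : ‖x‖ ≠ 0 := norm_ne_zero_iff.2 hx
    have hsphere := hmin (‖x‖⁻¹ • x) (by simp [norm_smul, hnx])
    have hhom : ⟪x, matApply M x⟫ = ‖x‖ ^ 2 * ⟪‖x‖⁻¹ • x, matApply M (‖x‖⁻¹ • x)⟫ := by
      simp only [matApply, map_smul, real_inner_smul_left, real_inner_smul_right]
      field_simp
    rw [hhom, mul_comm μ]
    gcongr

lemma exists_norm_le_of_inner_matApply_le (hM : M.PosDef) (C : ℝ) :
    ∃ R, 0 ≤ R ∧ ∀ x : Evec n, ⟪x, matApply M x⟫ ≤ C → ‖x‖ ≤ R := by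
  obtain ⟨μ, hμ, hquad⟩ := hM.exists_pos_mul_norm_sq_le
  refine ⟨√(C / μ), Real.sqrt_nonneg _, fun x hx => ?_⟩
  rw [← abs_norm]
  exact Real.abs_le_sqrt ((le_div_iff₀ hμ).2 (by linarith [hquad x]))

end Matrix.PosDef

section SupportFunction

variable {y z : Evec n} {C : Set (Evec n)}

lemma inner_le_suppFnE (hz : z ∈ C) : ((⟪y, z⟫ : ℝ) : EReal) ≤ suppFnE y C :=
  le_iSup₂ (f := fun w (_ : w ∈ C) => ((⟪y, w⟫ : ℝ) : EReal)) z hz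

lemma suppFnE_nonneg_of_zero_mem (h0 : 0 ∈ C) : 0 ≤ suppFnE y C := by
  simpa using inner_le_suppFnE (y := y) h0

lemma neg_norm_le_suppFnE (hy : ‖y‖ ≤ 1) (hz : z ∈ C) : ((-‖z‖ : ℝ) : EReal) ≤ suppFnE y C := by
  refine le_trans (EReal.coe_le_coe_iff.2 ?_) (inner_le_suppFnE hz)
  have := abs_le.1 (abs_real_inner_le_norm y z)
  nlinarith [norm_nonneg z]

end SupportFunction

section Constraints

variable {mbar : ℕ} {a : Fin m → Evec n} {b : Fin m → ℝ} {i : Fin m}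

lemma norm_abar (ha : a i ≠ 0) : ‖abar a i‖ = 1 := by
  rw [abar, norm_smul, norm_inv, norm_norm, inv_mul_cancel₀ (norm_ne_zero_iff.2 ha)]

lemma neg_bbar_smul_abar_mem_Cset (ha : a i ≠ 0) : -bbar a b i • abar a i ∈ Cset mbar a b i := by
  have hplane : ⟪abar a i, -bbar a b i • abar a i⟫ + bbar a b i = 0 := by
    rw [real_inner_smul_right, real_inner_self_eq_norm_mul_norm, norm_abar ha]
    ring
  unfold Cset
  split
  · exact hplane
  · exact hplane.le

lemma neg_abs_le_norm_mul_suppFnE_Cset (ha : a i ≠ 0) {y : Evec n} (hy : ‖y‖ ≤ 1) :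
    ((-|b i| : ℝ) : EReal) ≤ ‖a i‖ * suppFnE y (Cset mbar a b i) := by
  have hnorm : ‖a i‖ * -‖-bbar a b i • abar a i‖ = -|b i| := by
    rw [norm_smul, norm_abar ha, mul_one, norm_neg, Real.norm_eq_abs, bbar, abs_div, abs_norm,
      mul_neg, mul_div_cancel₀ _ (norm_ne_zero_iff.2 ha)]
  rw [← hnorm, EReal.coe_mul]
  exact mul_le_mul_of_nonneg_left (neg_norm_le_suppFnE hy (neg_bbar_smul_abar_mem_Cset ha))
    (EReal.coe_nonneg.2 (norm_nonneg _))

end Constraints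

variable {mbar : ℕ} {g : Evec n} {a : Fin m → Evec n} {b : Fin m → ℝ}
  {Hf H0 : Matrix (Fin n) (Fin n) ℝ} {X : Set (Evec n)} {u0 um1 : Evec n} {u : Fin m → Evec n}

lemma DvalE_zero_le (ha : ∀ i, a i ≠ 0) (hu : ∀ i, ‖u i‖ ≤ 1) (hX0 : 0 ∈ X) :
    DvalE mbar g a b Hf H0 X 0 u0 u um1 ≤
      ((-(1/2) * ⟪u0, matApply (Hmat Hf H0 0)⁻¹ u0⟫ + ∑ i, |b i| : ℝ) : EReal) := by
  have hsum : ((-∑ i, |b i| : ℝ) : EReal) ≤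
      ∑ i, (‖a i‖ : EReal) * suppFnE (u i) (Cset mbar a b i) := by
    rw [← Finset.sum_neg_distrib, EReal.coe_finset_sum]
    exact Finset.sum_le_sum fun i _ => neg_abs_le_norm_mul_suppFnE_Cset (ha i) (hu i)
  rw [DvalE, zero_smul, sub_zero]
  calc _ ≤ ((-(1/2) * ⟪u0, matApply (Hmat Hf H0 0)⁻¹ u0⟫ : ℝ) : EReal)
          - ((-∑ i, |b i| : ℝ) : EReal) - 0 :=
        EReal.sub_le_sub (EReal.sub_le_sub le_rfl hsum) (suppFnE_nonneg_of_zero_mem hX0)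
    _ = _ := by rw [sub_zero, ← EReal.coe_sub, sub_neg_eq_add]

lemma DualFeasible.norm_le (h : DualFeasible a u0 u um1) : ‖um1‖ ≤ ‖u0‖ + ∑ i, ‖a i‖ := by
  rw [eq_neg_of_add_eq_zero_right h.1, norm_neg]
  calc ‖u0 + ∑ i, ‖a i‖ • u i‖ ≤ ‖u0‖ + ∑ i, ‖‖a i‖ • u i‖ :=
        (norm_add_le _ _).trans (add_le_add le_rfl (norm_sum_le _ _))
    _ ≤ ‖u0‖ + ∑ i, ‖a i‖ := by
        gcongr with i
        rw [norm_smul, norm_norm]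
        exact mul_le_of_le_one_right (norm_nonneg _) (h.2 i)

theorem statement_0_general
    (n m mbar : ℕ)
    (g : Evec n) (a : Fin m → Evec n) (ha : ∀ i, a i ≠ 0) (b : Fin m → ℝ)
    (Hf H0 : Matrix (Fin n) (Fin n) ℝ)
    (ρ₀ : ℝ) (hρ₀ : 0 < ρ₀)
    (hpos : ∀ ρ ∈ Set.Icc (0:ℝ) ρ₀, (Hmat Hf H0 ρ).PosDef)
    (X : Set (Evec n)) (hX0 : (0 : Evec n) ∈ X)
    (c₀ : ℝ) :
    ∃ κ₀ : ℝ, 0 < κ₀ ∧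
      ∀ (u0 : Evec n) (u : Fin m → Evec n) (um1 : Evec n),
        DualFeasible a u0 u um1 →
        (c₀ : EReal) ≤ DvalE mbar g a b Hf H0 X 0 u0 u um1 →
        ‖u0‖ ≤ κ₀ ∧ (∀ i, ‖u i‖ ≤ κ₀) ∧ ‖um1‖ ≤ κ₀ := by
  obtain ⟨R, hR, hsublevel⟩ := (hpos 0 ⟨le_rfl, hρ₀.le⟩).inv.exists_norm_le_of_inner_matApply_le
    (2 * (∑ i, |b i| - c₀))
  have hA : 0 ≤ ∑ i, ‖a i‖ := Finset.sum_nonneg fun i _ => norm_nonneg _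
  refine ⟨R + ∑ i, ‖a i‖ + 1, by positivity, fun u0 u um1 hfeas hD => ?_⟩
  have hreal : c₀ ≤ -(1/2) * ⟪u0, matApply (Hmat Hf H0 0)⁻¹ u0⟫ + ∑ i, |b i| :=
    EReal.coe_le_coe_iff.1 (hD.trans (DvalE_zero_le ha hfeas.2 hX0))
  have hu0 : ‖u0‖ ≤ R := hsublevel u0 (by linarith)
  have hum1 := hfeas.norm_le
  exact ⟨by linarith, fun i => by linarith [hfeas.2 i], by linarith⟩

/-- There exists a constant `κ₀ > 0`, depending only on the QP data and on `c₀`,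
such that every dual-feasible point `u = (u⁰, u¹, …, uᵐ, u^{m+1})` with `D(u,0) ≥ c₀`
satisfies `‖uⁱ‖₂ ≤ κ₀` for every `i ∈ {0, 1, …, m+1}`. -/
theorem statement_0
    (n m mbar : ℕ) (hn : 1 ≤ n) (hmm : mbar ≤ m)
    (g : Evec n) (a : Fin m → Evec n) (ha : ∀ i, a i ≠ 0) (b : Fin m → ℝ)
    (Hf H0 : Matrix (Fin n) (Fin n) ℝ) (hHf : Hf.IsHermitian) (hH0 : H0.IsHermitian)
    (ρ₀ : ℝ) (hρ₀ : 0 < ρ₀)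
    (hpos : ∀ ρ ∈ Set.Icc (0:ℝ) ρ₀, (Hmat Hf H0 ρ).PosDef)
    (X : Set (Evec n)) (hXne : X.Nonempty) (hXcp : IsCompact X)
    (hXcv : Convex ℝ X) (hX0 : (0 : Evec n) ∈ X)
    (c₀ : ℝ) :
    ∃ κ₀ : ℝ, 0 < κ₀ ∧
      ∀ (u0 : Evec n) (u : Fin m → Evec n) (um1 : Evec n),
        DualFeasible a u0 u um1 →
        (c₀ : EReal) ≤ DvalE mbar g a b Hf H0 X 0 u0 u um1 →
        ‖u0‖ ≤ κ₀ ∧ (∀ i, ‖u i‖ ≤ κ₀) ∧ ‖um1‖ ≤ κ₀ :=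
  statement_0_general n m mbar g a ha b Hf H0 ρ₀ hρ₀ hpos X hX0 c₀
end
end

section
/- Suppose λ̲, λ̄ > 0 satisfy λ̲‖z‖₂² ≤ ⟨z, H_ρ z⟩ ≤ λ̄‖z‖₂² for all z ∈ ℝⁿ and all ρ ∈ [0,ρ₀]. Then for every ρ ∈ (0,ρ₀] and every d ∈ X with J(d,ρ) ≤ J(0,ρ), one has ‖d‖₂ ≤ (ρ₀‖g‖₂ + √(ρ₀²‖g‖₂² + 2λ̄J⁰)) / λ̲. -/
open scoped RealInnerProductSpace
open Finset

noncomputable section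

variable {n m : ℕ}

/-- Suppose `λ̲, λ̄ > 0` satisfy `λ̲‖z‖² ≤ ⟨z, H_ρ z⟩ ≤ λ̄‖z‖²` for all `z ∈ ℝⁿ`
and all `ρ ∈ [0,ρ₀]`.  Then for every `ρ ∈ (0,ρ₀]` and every `d ∈ X` with `J(d,ρ) ≤ J(0,ρ)`,
one has `‖d‖₂ ≤ (ρ₀‖g‖₂ + √(ρ₀²‖g‖₂² + 2λ̄J⁰)) / λ̲`. -/
theorem statement_1
    (n m mbar : ℕ) (hn : 1 ≤ n) (hmm : mbar ≤ m)
    (g : Evec n) (a : Fin m → Evec n) (ha : ∀ i, a i ≠ 0) (b : Fin m → ℝ)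
    (Hf H0 : Matrix (Fin n) (Fin n) ℝ) (hHf : Hf.IsHermitian) (hH0 : H0.IsHermitian)
    (ρ₀ : ℝ) (hρ₀ : 0 < ρ₀)
    (hpos : ∀ ρ ∈ Set.Icc (0:ℝ) ρ₀, (Hmat Hf H0 ρ).PosDef)
    (X : Set (Evec n)) (hXne : X.Nonempty) (hXcp : IsCompact X)
    (hXcv : Convex ℝ X) (hX0 : (0 : Evec n) ∈ X)
    (lamlo lamhi : ℝ) (hlamlo : 0 < lamlo) (hlamhi : 0 < lamhi)
    (hquad : ∀ ρ ∈ Set.Icc (0:ℝ) ρ₀, ∀ z : Evec n,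
      lamlo * ‖z‖ ^ 2 ≤ ⟪z, matApply (Hmat Hf H0 ρ) z⟫ ∧
      ⟪z, matApply (Hmat Hf H0 ρ) z⟫ ≤ lamhi * ‖z‖ ^ 2) :
    ∀ ρ ∈ Set.Ioc (0:ℝ) ρ₀, ∀ d ∈ X,
      Jval mbar g a b Hf H0 ρ d ≤ Jval mbar g a b Hf H0 ρ 0 →
      ‖d‖ ≤ (ρ₀ * ‖g‖ + Real.sqrt (ρ₀ ^ 2 * ‖g‖ ^ 2 + 2 * lamhi * lpen mbar a b 0)) / lamlo := by

  intro ρ hρ d hd hJ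
  have hρIcc : ρ ∈ Set.Icc (0:ℝ) ρ₀ := ⟨le_of_lt hρ.1, hρ.2⟩
  -- lpen nonneg
  have hlpen : ∀ e : Evec n, 0 ≤ lpen mbar a b e := by
    intro e
    apply Finset.sum_nonneg
    intro i _
    by_cases h : (i : ℕ) < mbar
    · simp [h, abs_nonneg]
    · simp [h, le_max_right]
  -- J(0,ρ) = lpen 0
  have hJ0 : Jval mbar g a b Hf H0 ρ 0 = lpen mbar a b 0 := by
    simp [Jval, matApply, inner_zero_right, inner_zero_left]
  set L := lpen mbar a b 0 with hL
  have hLnn : 0 ≤ L := hlpen 0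
  set t := ‖d‖ with ht
  have htnn : 0 ≤ t := norm_nonneg d
  -- inner bound
  have hinner : |⟪g, d⟫| ≤ ‖g‖ * t := abs_real_inner_le_norm g d
  have hquadlo := (hquad ρ hρIcc d).1
  -- key inequality
  have hkey : lamlo * t ^ 2 ≤ 2 * (ρ₀ * ‖g‖) * t + 2 * L := by
    have h1 : ρ * ⟪g, d⟫ + (1/2) * ⟪d, matApply (Hmat Hf H0 ρ) d⟫ + lpen mbar a b d
        ≤ L := by
      have := hJ
      rw [hJ0] at this
      simpa [Jval] using this
    have h2 : -(ρ * (‖g‖ * t)) ≤ ρ * ⟪g, d⟫ := by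
      have := neg_abs_le (⟪g, d⟫)
      nlinarith [hρ.1.le, abs_real_inner_le_norm g d]
    have h3 : 0 ≤ lpen mbar a b d := hlpen d
    have h4 : ρ * (‖g‖ * t) ≤ ρ₀ * (‖g‖ * t) := by
      have : 0 ≤ ‖g‖ * t := mul_nonneg (norm_nonneg g) htnn
      nlinarith [hρ.2]
    nlinarith
  have hlolehi : lamlo ≤ lamhi := by
    have hz : ‖(EuclideanSpace.single (⟨0, hn⟩ : Fin n) (1:ℝ))‖ = 1 := by
      simp [EuclideanSpace.norm_single]
    obtain ⟨h5, h6⟩ := hquad ρ₀ ⟨le_of_lt hρ₀, le_refl _⟩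
      (EuclideanSpace.single (⟨0, hn⟩ : Fin n) (1:ℝ))
    rw [hz] at h5 h6
    nlinarith
  -- quadratic formula step
  set A := ρ₀ * ‖g‖ with hA
  have hAnn : 0 ≤ A := mul_nonneg hρ₀.le (norm_nonneg g)
  set s := Real.sqrt (ρ₀ ^ 2 * ‖g‖ ^ 2 + 2 * lamhi * L) with hs
  have hsnn : 0 ≤ s := Real.sqrt_nonneg _
  have hs2 : s ^ 2 = A ^ 2 + 2 * lamhi * L := by
    rw [hs, Real.sq_sqrt]
    · ring
    · nlinarith
  rw [div_eq_inv_mul]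
  by_contra hcon
  push_neg at hcon
  have h7 : s < lamlo * t - A := by nlinarith [mul_lt_mul_of_pos_left hcon hlamlo, mul_inv_cancel₀ hlamlo.ne']
  nlinarith [sq_nonneg (lamlo * t - A - s)]
end
end

section
/- Let κ₀ > 0 and let λ̲ > 0 satisfy ⟨z, H_ρ z⟩ ≥ λ̲‖z‖₂² for all z ∈ ℝⁿ and all ρ ∈ [0,ρ₀]. Then for every ρ ∈ (0,ρ₀] and every u⁰ ∈ ℝⁿ with ‖u⁰‖₂ ≤ κ₀, one has |½⟨u⁰−ρg, H_ρ⁻¹(u⁰−ρg)⟩ − ½⟨u⁰, H₀⁻¹u⁰⟩| ≤ κ₃ ρ, where κ₃ := ((κ₀+ρ₀‖g‖₂)/(2λ̲))·(κ₀‖H₀⁻¹‖₂‖H_f‖₂ + ‖g‖₂) + ½κ₀‖H₀⁻¹‖₂‖g‖₂ and ‖·‖₂ on matrices is the operator norm. Consequently, every dual-feasible u with ‖u⁰‖₂ ≤ κ₀ and D(u,0) > −∞ satisfies |D(u,ρ) − D(u,0)| ≤ κ₃ ρ. -/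
open scoped RealInnerProductSpace
open Finset

noncomputable section

variable {n m : ℕ}

/-!
Write `w = H_ρ⁻¹ (u⁰ - ρ g)` and `v = H₀⁻¹ u⁰`. Because `H_ρ` is symmetric,
`⟨u⁰, v⟩ = ⟨H_ρ w + ρ g, v⟩ = ⟨w, H₀ v⟩ + ρ ⟨w, H_f v⟩ + ρ ⟨g, v⟩`, while
`⟨u⁰ - ρ g, w⟩ = ⟨w, H₀ v⟩ - ρ ⟨g, w⟩`. Hence the two quadratic terms differ by exactly
`-(ρ/2) (⟨g, w⟩ + ⟨w, H_f v⟩ + ⟨g, v⟩)`, without ever comparing `H_ρ⁻¹` and `H₀⁻¹` directly.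
Coercivity gives `λ̲ ‖w‖² ≤ ⟨w, u⁰ - ρ g⟩`, so `‖w‖ ≤ (κ₀ + ρ₀ ‖g‖) / λ̲`, and
`‖v‖ ≤ ‖H₀⁻¹‖ κ₀`; Cauchy–Schwarz then bounds the difference by `κ₃ ρ`. The support-function
terms of `D` do not depend on `ρ` and cancel.
-/

section PerturbedQuadratic

variable {E : Type*} [NormedAddCommGroup E] [InnerProductSpace ℝ E]

theorem norm_le_norm_div_of_coercive {lam : ℝ} (hlam : 0 < lam) {w y : E}
    (h : lam * ‖w‖ ^ 2 ≤ ⟪w, y⟫) : ‖w‖ ≤ ‖y‖ / lam := by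
  rw [le_div_iff₀ hlam]
  rcases (norm_nonneg w).eq_or_lt with hw | hw
  · rw [← hw, zero_mul]
    exact norm_nonneg y
  · refine le_of_mul_le_mul_left ?_ hw
    nlinarith [h.trans (real_inner_le_norm w y)]

theorem inner_sub_inner_eq_of_perturbation (F H : E →ₗ[ℝ] E) (ρ : ℝ) {u g w v : E}
    (hsymm : (ρ • F + H).IsSymmetric) (hw : (ρ • F + H) w = u - ρ • g) (hv : H v = u) :
    ⟪u - ρ • g, w⟫ - ⟪u, v⟫ = -ρ * (⟪g, w⟫ + ⟪w, F v⟫ + ⟪g, v⟫) := by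
  have hu : u = (ρ • F + H) w + ρ • g := by rw [hw, sub_add_cancel]
  have hsolve : ⟪u, v⟫ = ⟪w, H v⟫ + ρ * ⟪w, F v⟫ + ρ * ⟪g, v⟫ := by
    rw [hu, inner_add_left, hsymm, real_inner_smul_left, LinearMap.add_apply,
      LinearMap.smul_apply, inner_add_right, real_inner_smul_right]
    ring
  rw [hsolve, inner_sub_left, real_inner_smul_left, ← hv, real_inner_comm w]
  ring

theorem abs_inner_sub_inner_le_of_perturbation (F H : E →L[ℝ] E) {ρ lam : ℝ} (hρ : 0 ≤ ρ)
    (hlam : 0 < lam) {u g w v : E}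
    (hsymm : ((ρ • F + H : E →L[ℝ] E) : E →ₗ[ℝ] E).IsSymmetric)
    (hcoer : lam * ‖w‖ ^ 2 ≤ ⟪w, (ρ • F + H) w⟫)
    (hw : (ρ • F + H) w = u - ρ • g) (hv : H v = u) :
    |⟪u - ρ • g, w⟫ - ⟪u, v⟫| ≤ ρ * (‖u - ρ • g‖ / lam * (‖g‖ + ‖F‖ * ‖v‖) + ‖g‖ * ‖v‖) := by
  have hw_le : ‖w‖ ≤ ‖u - ρ • g‖ / lam := norm_le_norm_div_of_coercive hlam (hw ▸ hcoer)
  rw [inner_sub_inner_eq_of_perturbation (F : E →ₗ[ℝ] E) H ρ hsymm hw hv, abs_mul, abs_neg,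
    abs_of_nonneg hρ]
  gcongr
  calc |⟪g, w⟫ + ⟪w, F v⟫ + ⟪g, v⟫|
      ≤ ‖g‖ * ‖w‖ + ‖w‖ * (‖F‖ * ‖v‖) + ‖g‖ * ‖v‖ := by
        refine (abs_add_three _ _ _).trans (add_le_add_three ?_ ?_ ?_)
        · exact abs_real_inner_le_norm g w
        · exact (abs_real_inner_le_norm w (F v)).trans
            (mul_le_mul_of_nonneg_left (F.le_opNorm v) (norm_nonneg w))
        · exact abs_real_inner_le_norm g v
    _ = ‖w‖ * (‖g‖ + ‖F‖ * ‖v‖) + ‖g‖ * ‖v‖ := by ring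
    _ ≤ ‖u - ρ • g‖ / lam * (‖g‖ + ‖F‖ * ‖v‖) + ‖g‖ * ‖v‖ := by gcongr

end PerturbedQuadratic

open Matrix

theorem Matrix.IsHermitian.isSymmetric_toEuclideanCLM {ι 𝕜 : Type*} [Fintype ι] [DecidableEq ι]
    [RCLike 𝕜] {M : Matrix ι ι 𝕜} (hM : M.IsHermitian) :
    (toEuclideanCLM (n := ι) (𝕜 := 𝕜) M : EuclideanSpace 𝕜 ι →ₗ[𝕜] _).IsSymmetric := by
  rw [coe_toEuclideanCLM_eq_toEuclideanLin]
  exact isSymmetric_toEuclideanLin_iff.mpr hM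

theorem matApply_eq_toEuclideanCLM (M : Matrix (Fin n) (Fin n) ℝ) (x : Evec n) :
    matApply M x = toEuclideanCLM (n := Fin n) (𝕜 := ℝ) M x := rfl

theorem opNorm_eq_norm_toEuclideanCLM (M : Matrix (Fin n) (Fin n) ℝ) :
    opNorm M = ‖toEuclideanCLM (n := Fin n) (𝕜 := ℝ) M‖ := rfl

theorem norm_matApply_le (M : Matrix (Fin n) (Fin n) ℝ) (x : Evec n) :
    ‖matApply M x‖ ≤ opNorm M * ‖x‖ :=
  (toEuclideanCLM (n := Fin n) (𝕜 := ℝ) M).le_opNorm x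

theorem matApply_matApply_inv {M : Matrix (Fin n) (Fin n) ℝ} (hM : IsUnit M.det)
    (x : Evec n) : matApply M (matApply M⁻¹ x) = x := by
  rw [matApply_eq_toEuclideanCLM, matApply_eq_toEuclideanCLM, ← mul_apply_eq_comp, ← map_mul,
    mul_nonsing_inv M hM, map_one, one_apply_eq_self]

theorem toEuclideanCLM_Hmat (Hf H0 : Matrix (Fin n) (Fin n) ℝ) (ρ : ℝ) :
    toEuclideanCLM (n := Fin n) (𝕜 := ℝ) (Hmat Hf H0 ρ)
      = ρ • toEuclideanCLM (n := Fin n) (𝕜 := ℝ) Hf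
        + toEuclideanCLM (n := Fin n) (𝕜 := ℝ) H0 := by
  rw [Hmat, map_add, map_smul]

theorem abs_half_inner_Hmat_inv_sub_le (g : Evec n) (Hf H0 : Matrix (Fin n) (Fin n) ℝ)
    {ρ ρ₀ κ₀ lam : ℝ} (hρ : 0 ≤ ρ) (hρρ₀ : ρ ≤ ρ₀) (hlam : 0 < lam)
    (hPρ : (Hmat Hf H0 ρ).PosDef) (hH0 : IsUnit H0.det)
    (hcoer : ∀ z : Evec n, lam * ‖z‖ ^ 2 ≤ ⟪z, matApply (Hmat Hf H0 ρ) z⟫)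
    {u0 : Evec n} (hu0 : ‖u0‖ ≤ κ₀) :
    |(1/2) * ⟪u0 - ρ • g, matApply (Hmat Hf H0 ρ)⁻¹ (u0 - ρ • g)⟫
        - (1/2) * ⟪u0, matApply H0⁻¹ u0⟫|
      ≤ (((κ₀ + ρ₀ * ‖g‖) / (2 * lam)) * (κ₀ * opNorm H0⁻¹ * opNorm Hf + ‖g‖)
          + (1/2) * κ₀ * opNorm H0⁻¹ * ‖g‖) * ρ := by
  set w := matApply (Hmat Hf H0 ρ)⁻¹ (u0 - ρ • g)
  set v := matApply H0⁻¹ u0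
  have hw : matApply (Hmat Hf H0 ρ) w = u0 - ρ • g :=
    matApply_matApply_inv hPρ.det_pos.ne'.isUnit _
  have hv : matApply H0 v = u0 := matApply_matApply_inv hH0 _
  have hsymm := hPρ.1.isSymmetric_toEuclideanCLM
  simp only [matApply_eq_toEuclideanCLM, toEuclideanCLM_Hmat] at hw hv hcoer hsymm
  have hdiff := abs_inner_sub_inner_le_of_perturbation _ _ hρ hlam hsymm (hcoer w) hw hv
  rw [← opNorm_eq_norm_toEuclideanCLM] at hdiff
  have hrhs : ‖u0 - ρ • g‖ ≤ κ₀ + ρ₀ * ‖g‖ :=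
    calc ‖u0 - ρ • g‖ ≤ ‖u0‖ + ρ * ‖g‖ := by
          rw [← norm_smul_of_nonneg hρ]; exact norm_sub_le _ _
      _ ≤ κ₀ + ρ₀ * ‖g‖ := by gcongr
  have hv_le : ‖v‖ ≤ opNorm H0⁻¹ * κ₀ :=
    (norm_matApply_le _ _).trans (mul_le_mul_of_nonneg_left hu0 (norm_nonneg _))
  have hκ₀ : 0 ≤ κ₀ := (norm_nonneg u0).trans hu0
  have hρ₀ : 0 ≤ ρ₀ := hρ.trans hρρ₀
  have hHf : 0 ≤ opNorm Hf := norm_nonneg _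
  calc _ = (1/2) * |⟪u0 - ρ • g, w⟫ - ⟪u0, v⟫| := by
        rw [← mul_sub, abs_mul, abs_of_pos one_half_pos]
    _ ≤ (1/2) * (ρ * ((κ₀ + ρ₀ * ‖g‖) / lam * (‖g‖ + opNorm Hf * (opNorm H0⁻¹ * κ₀))
          + ‖g‖ * (opNorm H0⁻¹ * κ₀))) := by
        gcongr
        exact hdiff.trans (by gcongr)
    _ = _ := by field_simp; ring

theorem Dval_sub_Dval_zero (mbar : ℕ) (g : Evec n) (a : Fin m → Evec n) (b : Fin m → ℝ)
    (Hf H0 : Matrix (Fin n) (Fin n) ℝ) (X : Set (Evec n)) (ρ : ℝ)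
    (u0 : Evec n) (u : Fin m → Evec n) (um1 : Evec n) :
    Dval mbar g a b Hf H0 X ρ u0 u um1 - Dval mbar g a b Hf H0 X 0 u0 u um1
      = -((1/2) * ⟪u0 - ρ • g, matApply (Hmat Hf H0 ρ)⁻¹ (u0 - ρ • g)⟫
          - (1/2) * ⟪u0, matApply H0⁻¹ u0⟫) := by
  simp only [Dval, Hmat, zero_smul, zero_add, sub_zero]
  ring

theorem statement_3_general
    (n m mbar : ℕ)
    (g : Evec n) (a : Fin m → Evec n) (b : Fin m → ℝ)
    (Hf H0 : Matrix (Fin n) (Fin n) ℝ)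
    (ρ₀ : ℝ)
    (hpos : ∀ ρ ∈ Set.Icc (0:ℝ) ρ₀, (Hmat Hf H0 ρ).PosDef)
    (X : Set (Evec n))
    (κ₀ lamlo : ℝ) (hlamlo : 0 < lamlo)
    (hquad : ∀ ρ ∈ Set.Icc (0:ℝ) ρ₀, ∀ z : Evec n,
      lamlo * ‖z‖ ^ 2 ≤ ⟪z, matApply (Hmat Hf H0 ρ) z⟫) :
    ∀ ρ ∈ Set.Ioc (0:ℝ) ρ₀,
      (∀ u0 : Evec n, ‖u0‖ ≤ κ₀ →
        |(1/2) * ⟪u0 - ρ • g, matApply (Hmat Hf H0 ρ)⁻¹ (u0 - ρ • g)⟫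
            - (1/2) * ⟪u0, matApply H0⁻¹ u0⟫|
          ≤ (((κ₀ + ρ₀ * ‖g‖) / (2 * lamlo)) * (κ₀ * opNorm H0⁻¹ * opNorm Hf + ‖g‖)
              + (1/2) * κ₀ * opNorm H0⁻¹ * ‖g‖) * ρ) ∧
      (∀ (u0 : Evec n) (u : Fin m → Evec n) (um1 : Evec n),
        DualFeasible a u0 u um1 → ‖u0‖ ≤ κ₀ →
        (∀ i, BddAbove ((fun z => ⟪u i, z⟫) '' Cset mbar a b i)) →
        BddAbove ((fun z => ⟪um1, z⟫) '' X) →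
        |Dval mbar g a b Hf H0 X ρ u0 u um1 - Dval mbar g a b Hf H0 X 0 u0 u um1|
          ≤ (((κ₀ + ρ₀ * ‖g‖) / (2 * lamlo)) * (κ₀ * opNorm H0⁻¹ * opNorm Hf + ‖g‖)
              + (1/2) * κ₀ * opNorm H0⁻¹ * ‖g‖) * ρ) := by
  intro ρ hρ
  have hρIcc : ρ ∈ Set.Icc 0 ρ₀ := Set.Ioc_subset_Icc_self hρ
  have hH0 : IsUnit H0.det := by
    simpa [Hmat] using (hpos 0 ⟨le_rfl, hρIcc.1.trans hρIcc.2⟩).det_pos.ne'.isUnit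
  have quad_bound : ∀ u0 : Evec n, ‖u0‖ ≤ κ₀ → _ := fun u0 hu0 =>
    abs_half_inner_Hmat_inv_sub_le g Hf H0 hρIcc.1 hρIcc.2 hlamlo (hpos ρ hρIcc) hH0
      (hquad ρ hρIcc) hu0
  refine ⟨quad_bound, fun u0 u um1 _ hu0 _ _ => ?_⟩
  rw [Dval_sub_Dval_zero, abs_neg]
  exact quad_bound u0 hu0

/-- Let `κ₀ > 0` and let `λ̲ > 0` satisfy `⟨z, H_ρ z⟩ ≥ λ̲‖z‖₂²` for all `z` and
all `ρ ∈ [0,ρ₀]`.  Then for every `ρ ∈ (0,ρ₀]` and every `u⁰` with `‖u⁰‖₂ ≤ κ₀`, one has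
`|½⟨u⁰−ρg, H_ρ⁻¹(u⁰−ρg)⟩ − ½⟨u⁰, H₀⁻¹u⁰⟩| ≤ κ₃ ρ`, where
`κ₃ := ((κ₀+ρ₀‖g‖₂)/(2λ̲))·(κ₀‖H₀⁻¹‖₂‖H_f‖₂ + ‖g‖₂) + ½κ₀‖H₀⁻¹‖₂‖g‖₂`.
Consequently, every dual-feasible `u` with `‖u⁰‖₂ ≤ κ₀` and `D(u,0) > −∞` (i.e. all the
support-function values are finite) satisfies `|D(u,ρ) − D(u,0)| ≤ κ₃ ρ`. -/
theorem statement_3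
    (n m mbar : ℕ) (hn : 1 ≤ n) (hmm : mbar ≤ m)
    (g : Evec n) (a : Fin m → Evec n) (ha : ∀ i, a i ≠ 0) (b : Fin m → ℝ)
    (Hf H0 : Matrix (Fin n) (Fin n) ℝ) (hHf : Hf.IsHermitian) (hH0 : H0.IsHermitian)
    (ρ₀ : ℝ) (hρ₀ : 0 < ρ₀)
    (hpos : ∀ ρ ∈ Set.Icc (0:ℝ) ρ₀, (Hmat Hf H0 ρ).PosDef)
    (X : Set (Evec n)) (hXne : X.Nonempty) (hXcp : IsCompact X)
    (hXcv : Convex ℝ X) (hX0 : (0 : Evec n) ∈ X)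
    (κ₀ lamlo : ℝ) (hκ₀ : 0 < κ₀) (hlamlo : 0 < lamlo)
    (hquad : ∀ ρ ∈ Set.Icc (0:ℝ) ρ₀, ∀ z : Evec n,
      lamlo * ‖z‖ ^ 2 ≤ ⟪z, matApply (Hmat Hf H0 ρ) z⟫) :
    ∀ ρ ∈ Set.Ioc (0:ℝ) ρ₀,
      (∀ u0 : Evec n, ‖u0‖ ≤ κ₀ →
        |(1/2) * ⟪u0 - ρ • g, matApply (Hmat Hf H0 ρ)⁻¹ (u0 - ρ • g)⟫
            - (1/2) * ⟪u0, matApply H0⁻¹ u0⟫|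
          ≤ (((κ₀ + ρ₀ * ‖g‖) / (2 * lamlo)) * (κ₀ * opNorm H0⁻¹ * opNorm Hf + ‖g‖)
              + (1/2) * κ₀ * opNorm H0⁻¹ * ‖g‖) * ρ) ∧
      (∀ (u0 : Evec n) (u : Fin m → Evec n) (um1 : Evec n),
        DualFeasible a u0 u um1 → ‖u0‖ ≤ κ₀ →
        (∀ i, BddAbove ((fun z => ⟪u i, z⟫) '' Cset mbar a b i)) →
        BddAbove ((fun z => ⟪um1, z⟫) '' X) →
        |Dval mbar g a b Hf H0 X ρ u0 u um1 - Dval mbar g a b Hf H0 X 0 u0 u um1|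
          ≤ (((κ₀ + ρ₀ * ‖g‖) / (2 * lamlo)) * (κ₀ * opNorm H0⁻¹ * opNorm Hf + ‖g‖)
              + (1/2) * κ₀ * opNorm H0⁻¹ * ‖g‖) * ρ) :=
  statement_3_general n m mbar g a b Hf H0 ρ₀ hpos X κ₀ lamlo hlamlo hquad
end
end

section
/- Let 0 < β_v < β_φ < 1, ω > 0, ρ ∈ (0,ρ₀], and κ₂, κ₃ > 0. Let d ∈ X, and let u, w be dual-feasible points with D(u,ρ), D(u,0), D(w,0) finite. Assume: (a) J(d,ρ) ≤ J⁰; (b) D(w,0) ≥ D(u,0); (c) D(u,ρ) ≤ J(d,ρ) and D(w,0) ≤ J⁰; (d) |J(d,ρ) − J(d,0)| ≤ κ₂ρ and |D(u,ρ) − D(u,0)| ≤ κ₃ρ; and (e) ρ ≤ ((ω + min(J⁰ − J(d,ρ), J⁰ − D(u,0))) / max(κ₂,κ₃)) · (1 − √(β_v/β_φ)). Then r_φ(d,u,ρ) ≥ β_φ implies r_v(d,w) ≥ β_v. -/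
open scoped RealInnerProductSpace
open Finset

noncomputable section

variable {n m : ℕ}

set_option maxHeartbeats 1000000 in
/-- Let `0 < β_v < β_φ < 1`, `ω > 0`, `ρ ∈ (0,ρ₀]`, and `κ₂, κ₃ > 0`.
Let `d ∈ X`, and let `u`, `w` be dual-feasible points with `D(u,ρ)`, `D(u,0)`, `D(w,0)`
finite (the support-function values are finite, i.e. the images are bounded above).
Assume: (a) `J(d,ρ) ≤ J⁰`; (b) `D(w,0) ≥ D(u,0)`; (c) `D(u,ρ) ≤ J(d,ρ)` and `D(w,0) ≤ J⁰`;
(d) `|J(d,ρ) − J(d,0)| ≤ κ₂ρ` and `|D(u,ρ) − D(u,0)| ≤ κ₃ρ`; and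
(e) `ρ ≤ ((ω + min(J⁰ − J(d,ρ), J⁰ − D(u,0))) / max(κ₂,κ₃)) · (1 − √(β_v/β_φ))`.
Then `r_φ(d,u,ρ) ≥ β_φ` implies `r_v(d,w) ≥ β_v`. -/
theorem statement_4
    (n m mbar : ℕ) (hn : 1 ≤ n) (hmm : mbar ≤ m)
    (g : Evec n) (a : Fin m → Evec n) (ha : ∀ i, a i ≠ 0) (b : Fin m → ℝ)
    (Hf H0 : Matrix (Fin n) (Fin n) ℝ) (hHf : Hf.IsHermitian) (hH0 : H0.IsHermitian)
    (ρ₀ : ℝ) (hρ₀ : 0 < ρ₀)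
    (hpos : ∀ ρ ∈ Set.Icc (0:ℝ) ρ₀, (Hmat Hf H0 ρ).PosDef)
    (X : Set (Evec n)) (hXne : X.Nonempty) (hXcp : IsCompact X)
    (hXcv : Convex ℝ X) (hX0 : (0 : Evec n) ∈ X)
    (βv βφ ω ρ κ₂ κ₃ : ℝ)
    (hβv : 0 < βv) (hβvφ : βv < βφ) (hβφ : βφ < 1) (hω : 0 < ω)
    (hρ : ρ ∈ Set.Ioc (0:ℝ) ρ₀) (hκ₂ : 0 < κ₂) (hκ₃ : 0 < κ₃)
    (d : Evec n) (hd : d ∈ X)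
    (u0 : Evec n) (u : Fin m → Evec n) (um1 : Evec n)
    (w0 : Evec n) (w : Fin m → Evec n) (wm1 : Evec n)
    (hu : DualFeasible a u0 u um1) (hw : DualFeasible a w0 w wm1)
    (hufin : ∀ i, BddAbove ((fun z => ⟪u i, z⟫) '' Cset mbar a b i))
    (hwfin : ∀ i, BddAbove ((fun z => ⟪w i, z⟫) '' Cset mbar a b i))
    (huXfin : BddAbove ((fun z => ⟪um1, z⟫) '' X))
    (hwXfin : BddAbove ((fun z => ⟪wm1, z⟫) '' X))
    (hA : Jval mbar g a b Hf H0 ρ d ≤ lpen mbar a b 0)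
    (hB : Dval mbar g a b Hf H0 X 0 u0 u um1 ≤ Dval mbar g a b Hf H0 X 0 w0 w wm1)
    (hC1 : Dval mbar g a b Hf H0 X ρ u0 u um1 ≤ Jval mbar g a b Hf H0 ρ d)
    (hC2 : Dval mbar g a b Hf H0 X 0 w0 w wm1 ≤ lpen mbar a b 0)
    (hD1 : |Jval mbar g a b Hf H0 ρ d - Jval mbar g a b Hf H0 0 d| ≤ κ₂ * ρ)
    (hD2 : |Dval mbar g a b Hf H0 X ρ u0 u um1 - Dval mbar g a b Hf H0 X 0 u0 u um1| ≤ κ₃ * ρ)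
    (hE : ρ ≤ ((ω + min (lpen mbar a b 0 - Jval mbar g a b Hf H0 ρ d)
                  (lpen mbar a b 0 - Dval mbar g a b Hf H0 X 0 u0 u um1)) / max κ₂ κ₃)
            * (1 - Real.sqrt (βv / βφ))) :
    (lpen mbar a b 0 + ω - Jval mbar g a b Hf H0 ρ d)
        / (lpen mbar a b 0 + ω - Dval mbar g a b Hf H0 X ρ u0 u um1) ≥ βφ →
    (lpen mbar a b 0 + ω - lpen mbar a b d)
        / (lpen mbar a b 0 + ω - max (Dval mbar g a b Hf H0 X 0 w0 w wm1) 0) ≥ βv := by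

  intro hyp
  -- notation
  have hβφ0 : 0 < βφ := hβv.trans hβvφ
  have hρpos : 0 < ρ := hρ.1
  set L := lpen mbar a b 0 with hLdef
  set Jr := Jval mbar g a b Hf H0 ρ d with hJrdef
  set J0d := Jval mbar g a b Hf H0 0 d with hJ0ddef
  set Du := Dval mbar g a b Hf H0 X ρ u0 u um1 with hDudef
  set D0u := Dval mbar g a b Hf H0 X 0 u0 u um1 with hD0udef
  set Wv := Dval mbar g a b Hf H0 X 0 w0 w wm1 with hWdef
  set ld := lpen mbar a b d with hlddef
  set κ := max κ₂ κ₃ with hκdef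
  set t := Real.sqrt (βv / βφ) with htdef
  have hκpos : 0 < κ := lt_max_of_lt_left hκ₂
  have ht0 : 0 < t := Real.sqrt_pos.2 (div_pos hβv hβφ0)
  have ht1 : t < 1 := by
    rw [htdef]
    have h1 : βv / βφ < 1 := (div_lt_one hβφ0).2 hβvφ
    have := Real.sqrt_lt_sqrt (div_pos hβv hβφ0).le h1
    simpa using this
  have ht2 : t * t * βφ = βv := by
    rw [htdef, Real.mul_self_sqrt (div_pos hβv hβφ0).le]
    field_simp
  -- 0 ≤ L
  have hJ0nn : 0 ≤ L := by
    rw [hLdef, lpen]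
    apply Finset.sum_nonneg
    intro i _
    split_ifs
    · exact abs_nonneg _
    · exact le_max_right _ _
  -- ld ≤ J0d
  have hquad : 0 ≤ ⟪d, matApply (Hmat Hf H0 0) d⟫ := by
    have h := (hpos 0 ⟨le_refl 0, hρ₀.le⟩).posSemidef.re_dotProduct_nonneg d
    simpa [matApply, Matrix.toEuclideanLin_apply, PiLp.inner_apply, dotProduct,
      Matrix.mulVec, mul_comm] using h
  have hld : ld ≤ J0d := by
    rw [hlddef, hJ0ddef, Jval]
    have : (0:ℝ) * ⟪g, d⟫ = 0 := zero_mul _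
    nlinarith [hquad]
  -- basic bounds
  have hκ2ρ : κ₂ * ρ ≤ κ * ρ := mul_le_mul_of_nonneg_right (le_max_left _ _) hρpos.le
  have hκ3ρ : κ₃ * ρ ≤ κ * ρ := mul_le_mul_of_nonneg_right (le_max_right _ _) hρpos.le
  clear_value L Jr J0d Du D0u Wv ld κ t
  have hN : ω ≤ L + ω - Jr := by linarith
  have hDnN : L + ω - Jr ≤ L + ω - Du := by linarith
  have hDnpos : 0 < L + ω - Du := lt_of_lt_of_le hω (le_trans hN hDnN)
  have hNum : βφ * (L + ω - Du) ≤ L + ω - Jr := (le_div_iff₀ hDnpos).1 hyp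
  -- from hE : κ ρ ≤ (ω + min)(1 - t)
  have hEκ : κ * ρ ≤ (ω + min (L - Jr) (L - D0u)) * (1 - t) := by
    have h := mul_le_mul_of_nonneg_left hE hκpos.le
    have heq : κ * (((ω + min (L - Jr) (L - D0u)) / κ) * (1 - t))
        = (ω + min (L - Jr) (L - D0u)) * (1 - t) := by
      field_simp
    rw [heq] at h
    exact h
  have h1t : 0 < 1 - t := by linarith
  have hκρnn : 0 ≤ κ * ρ := le_of_lt (mul_pos hκpos hρpos)
  have habs1 := abs_le.1 hD1
  have habs2 := abs_le.1 hD2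
  -- κρ ≤ N (1-t)
  have hNt : κ * ρ ≤ (L + ω - Jr) * (1 - t) := by
    refine le_trans hEκ (mul_le_mul_of_nonneg_right ?_ h1t.le)
    have := min_le_left (L - Jr) (L - D0u)
    linarith
  -- κρ ≤ (Dn + κρ)(1-t), hence t (Dn + κρ) ≤ Dn
  have h2 : κ * ρ ≤ ((L + ω - Du) + κ * ρ) * (1 - t) := by
    refine le_trans hEκ (mul_le_mul_of_nonneg_right ?_ h1t.le)
    have := min_le_right (L - Jr) (L - D0u)
    linarith
  have hDt : t * ((L + ω - Du) + κ * ρ) ≤ L + ω - Du := by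
    have hexp : ((L + ω - Du) + κ * ρ) * (1 - t)
        = (L + ω - Du) + κ * ρ - t * ((L + ω - Du) + κ * ρ) := by ring
    linarith [h2, hexp.le, hexp.ge]
  -- bounds on goal numerator / denominator
  have hWmax1 : max Wv 0 ≤ L := max_le hC2 hJ0nn
  have hWmax2 : Du - κ * ρ ≤ max Wv 0 := by
    have := le_max_left Wv 0
    linarith
  have hdenpos : 0 < L + ω - max Wv 0 := by linarith
  have hdenle : L + ω - max Wv 0 ≤ (L + ω - Du) + κ * ρ := by linarith
  have hnumge : (L + ω - Jr) - κ * ρ ≤ L + ω - ld := by linarith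
  rw [ge_iff_le, le_div_iff₀ hdenpos]
  have s1 : βv * (L + ω - max Wv 0) ≤ βv * ((L + ω - Du) + κ * ρ) :=
    mul_le_mul_of_nonneg_left hdenle hβv.le
  have s2 : t * βφ * (t * ((L + ω - Du) + κ * ρ)) ≤ t * βφ * (L + ω - Du) :=
    mul_le_mul_of_nonneg_left hDt (mul_nonneg ht0.le hβφ0.le)
  have e1 : t * βφ * (t * ((L + ω - Du) + κ * ρ)) = βv * ((L + ω - Du) + κ * ρ) := by
    rw [← ht2]; ring
  have e2 : t * βφ * (L + ω - Du) = t * (βφ * (L + ω - Du)) := by ring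
  have s3 : t * (βφ * (L + ω - Du)) ≤ t * (L + ω - Jr) :=
    mul_le_mul_of_nonneg_left hNum ht0.le
  have s4 : t * (L + ω - Jr) ≤ (L + ω - Jr) - κ * ρ := by
    have e : (L + ω - Jr) * (1 - t) = (L + ω - Jr) - t * (L + ω - Jr) := by ring
    linarith [hNt]
  linarith [s1, s2, e1.ge, e1.le, e2.ge, e2.le, s3, s4, hnumge]
end
end

section
/- Let d₀* be a minimizer of J(·,0) over X. Then l(0,0) − l(d₀*,0) ≥ ½⟨d₀*, H₀ d₀*⟩ ≥ 0; in particular the model reduction l(0,0) − l(d₀*,0) is nonnegative, and it equals zero if and only if d₀* = 0. -/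
open scoped RealInnerProductSpace
open Finset

noncomputable section

variable {n m : ℕ}

/-! Compare `d₀*` with the feasible point `0`, where the quadratic term vanishes; positive
definiteness of `H₀` then controls the sign of `½⟨d₀*, H₀ d₀*⟩` and its zero set. -/

section QuadraticForm

variable {n : ℕ}

lemma inner_matApply_self_eq_dotProduct (M : Matrix (Fin n) (Fin n) ℝ) (x : Evec n) :
    ⟪x, matApply M x⟫ = dotProduct x.ofLp (M.mulVec x.ofLp) := by
  simp [matApply, Matrix.toLpLin_apply, PiLp.inner_apply, dotProduct, mul_comm]

@[simp]
lemma matApply_zero (M : Matrix (Fin n) (Fin n) ℝ) : matApply M 0 = 0 :=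
  map_zero _

lemma Matrix.PosSemidef.inner_matApply_self_nonneg {M : Matrix (Fin n) (Fin n) ℝ}
    (hM : M.PosSemidef) (x : Evec n) :
    0 ≤ ⟪x, matApply M x⟫ := by
  simpa [inner_matApply_self_eq_dotProduct] using hM.dotProduct_mulVec_nonneg x.ofLp

lemma Matrix.PosDef.inner_matApply_self_pos {M : Matrix (Fin n) (Fin n) ℝ}
    (hM : M.PosDef) {x : Evec n} (hx : x ≠ 0) :
    0 < ⟪x, matApply M x⟫ := by
  simpa [inner_matApply_self_eq_dotProduct] using
    hM.dotProduct_mulVec_pos (x := x.ofLp) (by simpa using hx)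

end QuadraticForm

theorem statement_11_general
    (n m mbar : ℕ)
    (a : Fin m → Evec n) (b : Fin m → ℝ)
    (H0 : Matrix (Fin n) (Fin n) ℝ) (hH0 : H0.PosDef)
    (X : Set (Evec n)) (hX0 : (0 : Evec n) ∈ X)
    (dstar : Evec n)
    (hmin : ∀ d ∈ X,
      (1/2) * ⟪dstar, matApply H0 dstar⟫ + lpen mbar a b dstar
        ≤ (1/2) * ⟪d, matApply H0 d⟫ + lpen mbar a b d) :
    ((1/2) * ⟪dstar, matApply H0 dstar⟫ ≤ lpen mbar a b 0 - lpen mbar a b dstar) ∧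
    (0 ≤ (1/2) * ⟪dstar, matApply H0 dstar⟫) ∧
    (lpen mbar a b 0 - lpen mbar a b dstar = 0 ↔ dstar = 0) := by
  have hreduction :
      (1/2) * ⟪dstar, matApply H0 dstar⟫ ≤ lpen mbar a b 0 - lpen mbar a b dstar := by
    have h0 := hmin 0 hX0
    simp only [matApply_zero, inner_zero_left, mul_zero, zero_add] at h0
    linarith
  have hquad := hH0.posSemidef.inner_matApply_self_nonneg dstar
  refine ⟨hreduction, by positivity, fun hzero => ?_, fun hd => by rw [hd, sub_self]⟩
  by_contra hne
  have := hH0.inner_matApply_self_pos hne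
  linarith

/-- Let `d₀*` be a minimizer of `J(·,0) = ½⟨·,H₀·⟩ + l(·,0)` over `X`, where
`H₀` is symmetric positive definite.  Then `l(0,0) − l(d₀*,0) ≥ ½⟨d₀*, H₀ d₀*⟩ ≥ 0`;
in particular the model reduction `l(0,0) − l(d₀*,0)` is nonnegative, and it equals zero
if and only if `d₀* = 0`. -/
theorem statement_11
    (n m mbar : ℕ) (hn : 1 ≤ n) (hmm : mbar ≤ m)
    (a : Fin m → Evec n) (ha : ∀ i, a i ≠ 0) (b : Fin m → ℝ)
    (H0 : Matrix (Fin n) (Fin n) ℝ) (hH0 : H0.PosDef)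
    (X : Set (Evec n)) (hXne : X.Nonempty) (hXcp : IsCompact X)
    (hXcv : Convex ℝ X) (hX0 : (0 : Evec n) ∈ X)
    (dstar : Evec n) (hdX : dstar ∈ X)
    (hmin : ∀ d ∈ X,
      (1/2) * ⟪dstar, matApply H0 dstar⟫ + lpen mbar a b dstar
        ≤ (1/2) * ⟪d, matApply H0 d⟫ + lpen mbar a b d) :
    ((1/2) * ⟪dstar, matApply H0 dstar⟫ ≤ lpen mbar a b 0 - lpen mbar a b dstar) ∧
    (0 ≤ (1/2) * ⟪dstar, matApply H0 dstar⟫) ∧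
    (lpen mbar a b 0 - lpen mbar a b dstar = 0 ↔ dstar = 0) :=
  statement_11_general n m mbar a b H0 hH0 X hX0 dstar hmin
end
end

section
/- Let f̲ ∈ ℝ and define φ̃(x,ρ) := ρ(f(x) − f̲) + v(x). Let {x^k} ⊂ ℝⁿ and {ρ_k} ⊂ (0,∞) satisfy ρ_k → 0, f(x^k) ≥ f̲ for all k, and φ̃(x^{k+1},ρ_{k+1}) ≤ φ̃(x^k,ρ_k) for all k. If x* and x× are both limit points of {x^k} (limits of convergent subsequences), then v(x*) = 0 if and only if v(x×) = 0; that is, either every limit point of {x^k} is feasible for the NLP or every limit point is infeasible. -/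
open scoped RealInnerProductSpace
open Finset Filter

noncomputable section

variable {n m : ℕ}

/-- Constraint violation measure `v(x) = Σ_{i≤m̄} |cᵢ(x)| + Σ_{i>m̄} max(cᵢ(x),0)`. -/
def vmeas (mbar : ℕ) (c : Fin m → Evec n → ℝ) (x : Evec n) : ℝ :=
  ∑ i : Fin m, if (i : ℕ) < mbar then |c i x| else max (c i x) 0

/-- Let `φ̃(x,ρ) := ρ(f(x) − f̲) + v(x)`.  Suppose `ρ_k → 0`, `f(x^k) ≥ f̲`,
and `φ̃(x^{k+1},ρ_{k+1}) ≤ φ̃(x^k,ρ_k)` for all `k`.  If `x*` and `x×` are both limit points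
of `{x^k}`, then `v(x*) = 0 ↔ v(x×) = 0`: either every limit point is feasible for the
NLP or every limit point is infeasible. -/
theorem statement_18
    (n m mbar : ℕ) (hn : 1 ≤ n) (hmm : mbar ≤ m)
    (f : Evec n → ℝ) (c : Fin m → Evec n → ℝ)
    (hf : Continuous f) (hc : ∀ i, Continuous (c i))
    (flow : ℝ)
    (x : ℕ → Evec n) (ρ : ℕ → ℝ)
    (hρpos : ∀ k, 0 < ρ k) (hρlim : Tendsto ρ atTop (nhds 0))
    (hflow : ∀ k, flow ≤ f (x k))
    (hmono : ∀ k, ρ (k+1) * (f (x (k+1)) - flow) + vmeas mbar c (x (k+1))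
        ≤ ρ k * (f (x k) - flow) + vmeas mbar c (x k))
    (xstar xtimes : Evec n)
    (φ₁ φ₂ : ℕ → ℕ) (hφ₁ : StrictMono φ₁) (hφ₂ : StrictMono φ₂)
    (hlim₁ : Tendsto (fun k => x (φ₁ k)) atTop (nhds xstar))
    (hlim₂ : Tendsto (fun k => x (φ₂ k)) atTop (nhds xtimes)) :
    (vmeas mbar c xstar = 0 ↔ vmeas mbar c xtimes = 0) := by
  have hv_cont : Continuous (vmeas mbar c) := by
    unfold vmeas
    apply continuous_finset_sum
    intro i _
    by_cases h : (i : ℕ) < mbar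
    · simp only [h, if_true]; exact (hc i).abs
    · simp only [h, if_false]; exact (hc i).max continuous_const
  set g : ℕ → ℝ := fun k => ρ k * (f (x k) - flow) + vmeas mbar c (x k) with hg
  have hanti : Antitone g := antitone_nat_of_succ_le hmono
  have hbdd : BddBelow (Set.range g) := by
    refine ⟨0, ?_⟩
    rintro _ ⟨k, rfl⟩
    have h1 : 0 ≤ ρ k * (f (x k) - flow) :=
      mul_nonneg (hρpos k).le (sub_nonneg.2 (hflow k))
    have h2 : 0 ≤ vmeas mbar c (x k) := by
      unfold vmeas
      apply Finset.sum_nonneg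
      intro i _
      split
      · exact abs_nonneg _
      · exact le_max_right _ _
    simp only [hg]
    linarith
  have hglim : Tendsto g atTop (nhds (⨅ k, g k)) := tendsto_atTop_ciInf hanti hbdd
  have key : ∀ (φ : ℕ → ℕ), StrictMono φ → ∀ y : Evec n,
      Tendsto (fun k => x (φ k)) atTop (nhds y) → vmeas mbar c y = ⨅ k, g k := by
    intro φ hφ y hy
    have h1 : Tendsto (fun k => g (φ k)) atTop (nhds (⨅ k, g k)) :=
      hglim.comp hφ.tendsto_atTop
    have h2 : Tendsto (fun k => g (φ k)) atTop
        (nhds (0 * (f y - flow) + vmeas mbar c y)) := by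
      apply Tendsto.add
      · exact (hρlim.comp hφ.tendsto_atTop).mul
          (((hf.tendsto y).comp hy).sub tendsto_const_nhds)
      · exact (hv_cont.tendsto y).comp hy
    have := tendsto_nhds_unique h2 h1
    simpa using this
  rw [key φ₁ hφ₁ xstar hlim₁, key φ₂ hφ₂ xtimes hlim₂]
end
end
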